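/- There exist maxnil graphs G_1 and G_2, each isomorphic to K_6 minus an edge, and a graph G on 7 vertices that is the clique sum of G_1 and G_2 over K_5 (i.e., V(G_1) ∩ V(G_2) induces a complete graph on 5 vertices in both), such that G is maxnil. -/

import Mathlib

open SimpleGraph

/-- `H` is a minor of `G`: there is a family of nonempty, pairwise disjoint,
connected branch sets in `G`, one for each vertex of `H`, with an edge of `G`
between the branch sets of any two adjacent vertices of `H`. -/
def IsMinor {W V : Type} (H : SimpleGraph W) (G : SimpleGraph V) : Prop :=
  ∃ f : W → Set V,
    (∀ w, (f w).Nonempty) ∧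
    (∀ w, (G.induce (f w)).Connected) ∧
    (Pairwise fun w₁ w₂ => Disjoint (f w₁) (f w₂)) ∧
    ∀ ⦃w₁ w₂⦄, H.Adj w₁ w₂ → ∃ v₁ ∈ f w₁, ∃ v₂ ∈ f w₂, G.Adj v₁ v₂

/-- The result of a `∇Y`-move on the triangle `a b c` of `G`: delete the edges of
the triangle and add a new vertex (`none`) joined to `a`, `b`, `c`. -/
def triangleY {V : Type} (G : SimpleGraph V) (a b c : V) : SimpleGraph (Option V) :=
  (SimpleGraph.map Function.Embedding.some
      (G.deleteEdges {s(a, b), s(b, c), s(a, c)})) ⊔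
    SimpleGraph.fromEdgeSet {s((none : Option V), some a), s(none, some b), s(none, some c)}

/-- Membership in the Petersen family: the graphs obtained from `K₆` by
`∇Y`-moves and `Y∇`-moves (the inverse operation), up to isomorphism. -/
inductive IsPetersenFamily : ∀ {V : Type}, SimpleGraph V → Prop
  | k6 : IsPetersenFamily (⊤ : SimpleGraph (Fin 6))
  | deltaY {V : Type} {G : SimpleGraph V} {a b c : V} :
      IsPetersenFamily G → G.Adj a b → G.Adj b c → G.Adj a c →
      IsPetersenFamily (triangleY G a b c)
  | yDelta {V : Type} {G : SimpleGraph V} {a b c : V} :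
      IsPetersenFamily (triangleY G a b c) → G.Adj a b → G.Adj b c → G.Adj a c →
      IsPetersenFamily G
  | iso {V W : Type} {G : SimpleGraph V} {H : SimpleGraph W} :
      IsPetersenFamily G → G ≃g H → IsPetersenFamily H

/-- A graph is linklessly embeddable (nIL) iff it has no minor in the Petersen family. -/
def IsLinkless {V : Type} (G : SimpleGraph V) : Prop :=
  ∀ ⦃W : Type⦄ (P : SimpleGraph W), IsPetersenFamily P → ¬ IsMinor P G

/-- The graph obtained from `G` by adding the edge `ab`. -/
def addEdge {V : Type} (G : SimpleGraph V) (a b : V) : SimpleGraph V :=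
  G ⊔ SimpleGraph.fromEdgeSet {s(a, b)}

/-- A nIL graph is maxnil if adding any edge yields a graph that is not nIL. -/
def IsMaxnil {V : Type} (G : SimpleGraph V) : Prop :=
  IsLinkless G ∧ ∀ a b : V, a ≠ b → ¬ G.Adj a b → ¬ IsLinkless (addEdge G a b)

/-- `S` is a vertex cut set of the connected graph `G` if `G - S` is disconnected. -/
def IsVertexCut {V : Type} (G : SimpleGraph V) (S : Set V) : Prop :=
  G.Connected ∧ ¬ (G.induce Sᶜ).Preconnected

/-- A vertex cut set is minimal if no proper subset of it is a vertex cut set. -/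
def IsMinimalVertexCut {V : Type} (G : SimpleGraph V) (S : Set V) : Prop :=
  IsVertexCut G S ∧ ∀ S' ⊂ S, ¬ IsVertexCut G S'

/-- A set `T` of vertices of `H` (inducing a `K₄`) is strongly separating if `H - T`
has at least two connected components such that every vertex of `T` has a
neighbor in each of them. -/
def StronglySeparating {V : Type} (H : SimpleGraph V) (T : Set V) : Prop :=
  ∃ C₁ C₂ : (H.induce Tᶜ).ConnectedComponent, C₁ ≠ C₂ ∧
    ∀ v ∈ T, (∃ u ∈ C₁.supp, H.Adj v ↑u) ∧ (∃ u ∈ C₂.supp, H.Adj v ↑u)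

/-- `G` is maximal without a `K₆` minor. -/
def IsMaximalK6MinorFree {V : Type} (G : SimpleGraph V) : Prop :=
  ¬ IsMinor (⊤ : SimpleGraph (Fin 6)) G ∧
    ∀ a b : V, a ≠ b → ¬ G.Adj a b → IsMinor (⊤ : SimpleGraph (Fin 6)) (addEdge G a b)


/-!
Every graph of the Petersen family is isomorphic to one of `K₆`, `G₇`, `K₃,₃,₁`, `G₈`, `K₄,₄ - e`,
`G₉` and the Petersen graph `P₁₀`: the list is closed under `∇Y`-moves, and under `Y∇`-moves
because a `Y∇`-move is undone by the `∇Y`-move at the triangle it creates. Both closures are checked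
by exhibiting, for each triangle and each vertex of degree three of each of the seven graphs, an
isomorphism with a `∇Y`-graph of one of them.

Hence a graph on at most 7 vertices is linkless unless it has `K₆`, `G₇` or `K₃,₃,₁` as a minor.
`K₆ - e` has six vertices and is not complete. The graph `G` is `K₇` minus the path `0-5-6-1`, the
clique sum over `{0,1,2,3,4}` of two copies of `K₆ - e`. A 7-vertex minor of `G` is a spanning
subgraph, so the path in the complement of `G` would appear in the complement of `G₇` (a triangle
and a claw) or of `K₃,₃,₁` (two triangles). A `K₆` minor would have to put the non-adjacent
vertices `5` and `6`, both of degree 4, into one branch set. Adding any missing edge creates a `K₆`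
minor after contracting at most one edge.
-/

section TriangleY

variable {V V' : Type} (G : SimpleGraph V) (a b c : V)

theorem triangleY_adj_some_some {u v : V} :
    (triangleY G a b c).Adj (some u) (some v) ↔
      G.Adj u v ∧ ¬((u = a ∨ u = b ∨ u = c) ∧ (v = a ∨ v = b ∨ v = c)) := by
  simp only [triangleY, sup_adj, map_adj', fromEdgeSet_adj, deleteEdges_adj,
    Function.Embedding.some_apply, ne_eq, Option.some.injEq, Set.mem_insert_iff,
    Set.mem_singleton_iff, Sym2.eq_iff, reduceCtorEq, and_false, false_and, or_false,
    exists_eq_right_right, exists_eq_right]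
  have := G.loopless.irrefl u
  grind

theorem triangleY_adj_none {x : Option V} :
    (triangleY G a b c).Adj none x ↔ x = some a ∨ x = some b ∨ x = some c := by
  cases x <;> simp [triangleY, map_adj', eq_comm]

theorem triangleY_adj_none_some {v : V} :
    (triangleY G a b c).Adj none (some v) ↔ v = a ∨ v = b ∨ v = c := by
  simp [triangleY_adj_none]

theorem triangleY_adj_some_none {v : V} :
    (triangleY G a b c).Adj (some v) none ↔ v = a ∨ v = b ∨ v = c := by
  rw [adj_comm, triangleY_adj_none_some]

instance [DecidableEq V] [DecidableRel G.Adj] : DecidableRel (triangleY G a b c).Adj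
  | some _, some _ => decidable_of_iff _ (triangleY_adj_some_some G a b c).symm
  | none, some _ => decidable_of_iff _ (triangleY_adj_none_some G a b c).symm
  | some _, none => decidable_of_iff _ (triangleY_adj_some_none G a b c).symm
  | none, none => isFalse ((triangleY G a b c).loopless.irrefl none)

variable {G a b c}

theorem adj_iff_triangleY (hab : G.Adj a b) (hbc : G.Adj b c) (hac : G.Adj a c) {u v : V} :
    G.Adj u v ↔ (triangleY G a b c).Adj (some u) (some v) ∨
      ((triangleY G a b c).Adj none (some u) ∧ (triangleY G a b c).Adj none (some v) ∧ u ≠ v) := by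
  rw [triangleY_adj_some_some, triangleY_adj_none_some, triangleY_adj_none_some]
  constructor
  · intro h
    by_cases hT : (u = a ∨ u = b ∨ u = c) ∧ (v = a ∨ v = b ∨ v = c)
    · exact Or.inr ⟨hT.1, hT.2, h.ne⟩
    · exact Or.inl ⟨h, hT⟩
  · rintro (⟨h, -⟩ | ⟨hu, hv, hne⟩)
    · exact h
    · rcases hu with rfl | rfl | rfl <;> rcases hv with rfl | rfl | rfl <;>
        first | exact absurd rfl hne | assumption | exact Adj.symm ‹_›

def SimpleGraph.Iso.triangleYCongr {G' : SimpleGraph V'} (e : G ≃g G') {a' b' c' : V'}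
    (ha : e a = a') (hb : e b = b') (hc : e c = c') :
    triangleY G a b c ≃g triangleY G' a' b' c' where
  toEquiv := e.toEquiv.optionCongr
  map_rel_iff' := by
    subst ha hb hc
    rintro (_ | u) (_ | v) <;>
      simp [triangleY_adj_some_some, triangleY_adj_none_some, triangleY_adj_some_none,
        e.map_adj_iff]

theorem nonempty_iso_of_triangleY_iso {G' : SimpleGraph V'} {a' b' c' : V'}
    (hab : G.Adj a b) (hbc : G.Adj b c) (hac : G.Adj a c)
    (hab' : G'.Adj a' b') (hbc' : G'.Adj b' c') (hac' : G'.Adj a' c')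
    (φ : triangleY G a b c ≃g triangleY G' a' b' c') (hφ : φ none = none) :
    Nonempty (G ≃g G') := by
  set ψ := φ.toEquiv.removeNone
  have hψ : ∀ u, φ (some u) = some (ψ u) := fun u => by
    rcases h : φ (some u) with _ | x
    · exact absurd (φ.injective (h.trans hφ.symm)) (Option.some_ne_none u)
    · exact (h.symm.trans (Equiv.removeNone_some φ.toEquiv ⟨x, h⟩).symm)
  refine ⟨⟨ψ, fun {u v} => ?_⟩⟩
  rw [adj_iff_triangleY hab hbc hac, adj_iff_triangleY hab' hbc' hac', ← φ.map_adj_iff,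
    ← φ.map_adj_iff, ← φ.map_adj_iff, hψ, hψ, hφ, ψ.injective.ne_iff]

end TriangleY

section GraphEmbedding

variable {V W : Type} (G : SimpleGraph V) (H : SimpleGraph W) (τ : V → W)

/-- A decidable form of `G ↪g H` with a prescribed underlying map. -/
def IsGraphEmbedding : Prop :=
  (∀ x y, G.Adj x y ↔ H.Adj (τ x) (τ y)) ∧ τ.Injective

instance [Fintype V] [DecidableEq V] [DecidableEq W] [DecidableRel G.Adj] [DecidableRel H.Adj] :
    Decidable (IsGraphEmbedding G H τ) :=
  inferInstanceAs (Decidable (_ ∧ _))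

variable {G H τ}

def IsGraphEmbedding.toEmbedding (h : IsGraphEmbedding G H τ) : G ↪g H :=
  ⟨⟨τ, h.2⟩, fun {x y} => (h.1 x y).symm⟩

noncomputable def IsGraphEmbedding.toIso [Fintype V] [Fintype W] (h : IsGraphEmbedding G H τ)
    (hcard : Fintype.card V = Fintype.card W) : G ≃g H where
  toEquiv := Equiv.ofBijective τ ((Fintype.bijective_iff_injective_and_card τ).2 ⟨h.2, hcard⟩)
  map_rel_iff' := (h.1 _ _).symm

theorem IsGraphEmbedding.nonempty_induce_iso (h : IsGraphEmbedding G H τ) {s : Set W}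
    (hs : Set.range τ = s) : Nonempty (H.induce s ≃g G) := by
  subst hs
  exact ⟨h.toEmbedding.isoInduceRange.symm⟩

end GraphEmbedding

def ofEdges (n : ℕ) (l : List (Fin n × Fin n)) : SimpleGraph (Fin n) :=
  SimpleGraph.fromRel fun i j => (i, j) ∈ l

instance (n : ℕ) (l : List (Fin n × Fin n)) : DecidableRel (ofEdges n l).Adj :=
  fun _ _ => inferInstanceAs (Decidable (_ ∧ _))

namespace PetersenFamily

/-! `G₇`, `G₈`, `G₉` arise from `K₆` by `∇Y`-moves at the triangles `012`, `034`, `135`, the new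
vertex being the last one; `K₃,₃,₁` has parts `{0,1,2}`, `{3,4,5}`, `{6}`; `K₄,₄ - e` has parts
`{0,1,2,3}`, `{4,5,6,7}` and misses the edge `37`; `P₁₀` is the Petersen graph with outer cycle
`0-1-2-3-4`, spokes `i (i+5)` and inner pentagram on `5, …, 9`. -/
abbrev G7 : SimpleGraph (Fin 7) :=
  ofEdges 7
    [(0, 3), (0, 4), (0, 5), (0, 6), (1, 3), (1, 4), (1, 5), (1, 6), (2, 3), (2, 4), (2, 5),
       (2, 6), (3, 4), (3, 5), (4, 5)]

abbrev K331 : SimpleGraph (Fin 7) :=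
  ofEdges 7
    [(0, 3), (0, 4), (0, 5), (0, 6), (1, 3), (1, 4), (1, 5), (1, 6), (2, 3), (2, 4), (2, 5),
       (2, 6), (3, 6), (4, 6), (5, 6)]

abbrev G8 : SimpleGraph (Fin 8) :=
  ofEdges 8
    [(0, 5), (0, 6), (0, 7), (1, 3), (1, 4), (1, 5), (1, 6), (2, 3), (2, 4), (2, 5), (2, 6),
       (3, 5), (3, 7), (4, 5), (4, 7)]

abbrev K44e : SimpleGraph (Fin 8) :=
  ofEdges 8
    [(0, 4), (0, 5), (0, 6), (0, 7), (1, 4), (1, 5), (1, 6), (1, 7), (2, 4), (2, 5), (2, 6),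
       (2, 7), (3, 4), (3, 5), (3, 6)]

abbrev G9 : SimpleGraph (Fin 9) :=
  ofEdges 9
    [(0, 5), (0, 6), (0, 7), (1, 4), (1, 6), (1, 8), (2, 3), (2, 4), (2, 5), (2, 6), (3, 7),
       (3, 8), (4, 5), (4, 7), (5, 8)]

abbrev P10 : SimpleGraph (Fin 10) :=
  ofEdges 10
    [(0, 1), (0, 4), (0, 5), (1, 2), (1, 6), (2, 3), (2, 7), (3, 4), (3, 8), (4, 9), (5, 7),
       (5, 8), (6, 8), (6, 9), (7, 9)]

/-- Representatives of the Petersen family up to isomorphism. -/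
inductive IsRep : ∀ {n : ℕ}, SimpleGraph (Fin n) → Prop
  | k6 : IsRep (⊤ : SimpleGraph (Fin 6))
  | g7 : IsRep G7
  | k331 : IsRep K331
  | g8 : IsRep G8
  | k44e : IsRep K44e
  | g9 : IsRep G9
  | p10 : IsRep P10

def deltaYCertsK6G7 : List (Fin 7 → Option (Fin 6)) :=
  [![some 0, some 1, some 2, some 3, some 4, some 5, none],
   ![some 0, some 1, some 3, some 2, some 4, some 5, none],
   ![some 0, some 1, some 4, some 2, some 3, some 5, none],
   ![some 0, some 1, some 5, some 2, some 3, some 4, none],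
   ![some 0, some 2, some 3, some 1, some 4, some 5, none],
   ![some 0, some 2, some 4, some 1, some 3, some 5, none],
   ![some 0, some 2, some 5, some 1, some 3, some 4, none],
   ![some 0, some 3, some 4, some 1, some 2, some 5, none],
   ![some 0, some 3, some 5, some 1, some 2, some 4, none],
   ![some 0, some 4, some 5, some 1, some 2, some 3, none],
   ![some 1, some 2, some 3, some 0, some 4, some 5, none],
   ![some 1, some 2, some 4, some 0, some 3, some 5, none],
   ![some 1, some 2, some 5, some 0, some 3, some 4, none],
   ![some 1, some 3, some 4, some 0, some 2, some 5, none],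
   ![some 1, some 3, some 5, some 0, some 2, some 4, none],
   ![some 1, some 4, some 5, some 0, some 2, some 3, none],
   ![some 2, some 3, some 4, some 0, some 1, some 5, none],
   ![some 2, some 3, some 5, some 0, some 1, some 4, none],
   ![some 2, some 4, some 5, some 0, some 1, some 3, none],
   ![some 3, some 4, some 5, some 0, some 1, some 2, none]]

def deltaYCertsG7G8 : List (Fin 8 → Option (Fin 7)) :=
  [![some 0, some 1, some 2, some 3, some 4, some 5, some 6, none],
   ![some 0, some 1, some 2, some 3, some 5, some 4, some 6, none],
   ![some 0, some 1, some 2, some 4, some 5, some 3, some 6, none],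
   ![some 1, some 0, some 2, some 3, some 4, some 5, some 6, none],
   ![some 1, some 0, some 2, some 3, some 5, some 4, some 6, none],
   ![some 1, some 0, some 2, some 4, some 5, some 3, some 6, none],
   ![some 2, some 0, some 1, some 3, some 4, some 5, some 6, none],
   ![some 2, some 0, some 1, some 3, some 5, some 4, some 6, none],
   ![some 2, some 0, some 1, some 4, some 5, some 3, some 6, none]]

def deltaYCertsG7K44e : List (Fin 8 → Option (Fin 7)) :=
  [![some 0, some 1, some 2, none, some 3, some 4, some 5, some 6]]

def deltaYCertsK331G8 : List (Fin 8 → Option (Fin 7)) :=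
  [![none, some 1, some 2, some 4, some 5, some 6, some 3, some 0],
   ![none, some 1, some 2, some 3, some 5, some 6, some 4, some 0],
   ![none, some 1, some 2, some 3, some 4, some 6, some 5, some 0],
   ![none, some 0, some 2, some 4, some 5, some 6, some 3, some 1],
   ![none, some 0, some 2, some 3, some 5, some 6, some 4, some 1],
   ![none, some 0, some 2, some 3, some 4, some 6, some 5, some 1],
   ![none, some 0, some 1, some 4, some 5, some 6, some 3, some 2],
   ![none, some 0, some 1, some 3, some 5, some 6, some 4, some 2],
   ![none, some 0, some 1, some 3, some 4, some 6, some 5, some 2]]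

def deltaYCertsG8G9 : List (Fin 9 → Option (Fin 8)) :=
  [![some 0, some 1, some 2, some 3, some 4, some 5, some 6, some 7, none],
   ![some 0, some 1, some 2, some 4, some 3, some 5, some 6, some 7, none],
   ![some 0, some 2, some 1, some 3, some 4, some 5, some 6, some 7, none],
   ![some 0, some 2, some 1, some 4, some 3, some 5, some 6, some 7, none]]

def deltaYCertsG9P10 : List (Fin 10 → Option (Fin 9)) :=
  [![some 0, some 5, some 8, some 1, some 6, some 7, none, some 3, some 4, some 2]]

def yDeltaCertsG7K6 : List (Fin 7 → Option (Fin 6)) :=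
  [![some 0, some 1, some 2, some 3, some 4, some 5, none]]

def yDeltaCertsG8K331 : List (Fin 8 → Option (Fin 7)) :=
  [![none, some 1, some 2, some 4, some 5, some 6, some 3, some 0]]

def yDeltaCertsG8G7 : List (Fin 8 → Option (Fin 7)) :=
  [![some 0, some 3, some 4, some 1, some 2, some 5, none, some 6],
   ![some 0, some 1, some 2, some 3, some 4, some 5, some 6, none]]

def yDeltaCertsK44eG7 : List (Fin 8 → Option (Fin 7)) :=
  [![some 0, some 1, some 2, none, some 3, some 4, some 5, some 6],
   ![some 3, some 4, some 5, some 6, some 0, some 1, some 2, none]]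

def yDeltaCertsG9G8 : List (Fin 9 → Option (Fin 8)) :=
  [![none, some 6, some 4, some 7, some 2, some 5, some 1, some 3, some 0],
   ![some 6, none, some 4, some 7, some 5, some 2, some 1, some 0, some 3],
   ![some 6, some 7, some 5, none, some 4, some 2, some 0, some 1, some 3],
   ![some 1, some 3, some 5, some 0, some 2, some 4, none, some 6, some 7],
   ![some 1, some 0, some 2, some 3, some 5, some 4, some 6, none, some 7],
   ![some 0, some 1, some 2, some 3, some 4, some 5, some 6, some 7, none]]

def yDeltaCertsP10G9 : List (Fin 10 → Option (Fin 9)) :=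
  [![none, some 2, some 3, some 7, some 4, some 5, some 6, some 8, some 0, some 1],
   ![some 2, none, some 4, some 1, some 6, some 3, some 5, some 7, some 8, some 0],
   ![some 0, some 5, none, some 2, some 6, some 7, some 8, some 4, some 3, some 1],
   ![some 0, some 6, some 2, none, some 5, some 7, some 1, some 3, some 4, some 8],
   ![some 2, some 3, some 7, some 4, none, some 6, some 8, some 0, some 1, some 5],
   ![some 2, some 3, some 7, some 0, some 6, none, some 8, some 4, some 5, some 1],
   ![some 0, some 5, some 8, some 1, some 6, some 7, none, some 3, some 4, some 2],
   ![some 0, some 6, some 2, some 3, some 7, some 5, some 1, none, some 8, some 4],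
   ![some 0, some 6, some 1, some 4, some 7, some 5, some 2, some 8, none, some 3],
   ![some 0, some 6, some 1, some 8, some 5, some 7, some 2, some 4, some 3, none]]

def IsYDeltaVia {n m : ℕ} (M : SimpleGraph (Fin n)) (v : Fin n) (M' : SimpleGraph (Fin m))
    (certs : List (Fin n → Option (Fin m))) : Prop :=
  ∃ x y z, M'.Adj x y ∧ M'.Adj y z ∧ M'.Adj x z ∧
    ∃ τ ∈ certs, τ v = none ∧ IsGraphEmbedding M (triangleY M' x y z) τ

instance {n m : ℕ} (M : SimpleGraph (Fin n)) [DecidableRel M.Adj] (v : Fin n)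
    (M' : SimpleGraph (Fin m)) [DecidableRel M'.Adj] (certs : List (Fin n → Option (Fin m))) :
    Decidable (IsYDeltaVia M v M' certs) :=
  inferInstanceAs (Decidable (∃ _, _))

theorem K6_deltaY : ∀ a b c : Fin 6, a ≠ b → b ≠ c → a ≠ c →
    ∃ τ ∈ deltaYCertsK6G7, IsGraphEmbedding G7 (triangleY ⊤ a b c) τ := by
  decide +kernel

theorem G7_deltaY : ∀ a b c : Fin 7, G7.Adj a b → G7.Adj b c → G7.Adj a c →
    (∃ τ ∈ deltaYCertsG7G8, IsGraphEmbedding G8 (triangleY G7 a b c) τ) ∨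
      ∃ τ ∈ deltaYCertsG7K44e, IsGraphEmbedding K44e (triangleY G7 a b c) τ := by
  decide +kernel

theorem K331_deltaY : ∀ a b c : Fin 7, K331.Adj a b → K331.Adj b c → K331.Adj a c →
    ∃ τ ∈ deltaYCertsK331G8, IsGraphEmbedding G8 (triangleY K331 a b c) τ := by
  decide +kernel

theorem G8_deltaY : ∀ a b c : Fin 8, G8.Adj a b → G8.Adj b c → G8.Adj a c →
    ∃ τ ∈ deltaYCertsG8G9, IsGraphEmbedding G9 (triangleY G8 a b c) τ := by
  decide +kernel

theorem K44e_triangleFree : ∀ a b c : Fin 8, K44e.Adj a b → K44e.Adj b c → ¬K44e.Adj a c := by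
  decide +kernel

theorem G9_deltaY : ∀ a b c : Fin 9, G9.Adj a b → G9.Adj b c → G9.Adj a c →
    ∃ τ ∈ deltaYCertsG9P10, IsGraphEmbedding P10 (triangleY G9 a b c) τ := by
  decide +kernel

theorem P10_triangleFree : ∀ a b c : Fin 10, P10.Adj a b → P10.Adj b c → ¬P10.Adj a c := by
  decide +kernel

theorem K6_yDelta : ∀ v p q r : Fin 6,
    ¬∀ w, (⊤ : SimpleGraph (Fin 6)).Adj v w ↔ w = p ∨ w = q ∨ w = r := by
  decide +kernel

theorem G7_yDelta : ∀ v p q r : Fin 7, (∀ w, G7.Adj v w ↔ w = p ∨ w = q ∨ w = r) →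
    IsYDeltaVia G7 v ⊤ yDeltaCertsG7K6 := by
  decide +kernel

theorem K331_yDelta : ∀ v p q r : Fin 7, ¬∀ w, K331.Adj v w ↔ w = p ∨ w = q ∨ w = r := by
  decide +kernel

theorem G8_yDelta : ∀ v p q r : Fin 8, (∀ w, G8.Adj v w ↔ w = p ∨ w = q ∨ w = r) →
    IsYDeltaVia G8 v K331 yDeltaCertsG8K331 ∨ IsYDeltaVia G8 v G7 yDeltaCertsG8G7 := by
  decide +kernel

theorem K44e_yDelta : ∀ v p q r : Fin 8, (∀ w, K44e.Adj v w ↔ w = p ∨ w = q ∨ w = r) →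
    IsYDeltaVia K44e v G7 yDeltaCertsK44eG7 := by
  decide +kernel

theorem G9_yDelta : ∀ v p q r : Fin 9, (∀ w, G9.Adj v w ↔ w = p ∨ w = q ∨ w = r) →
    IsYDeltaVia G9 v G8 yDeltaCertsG9G8 := by
  decide +kernel

theorem P10_yDelta : ∀ v p q r : Fin 10, (∀ w, P10.Adj v w ↔ w = p ∨ w = q ∨ w = r) →
    IsYDeltaVia P10 v G9 yDeltaCertsP10G9 := by
  decide +kernel

theorem exists_rep_iso_triangleY {n : ℕ} {M : SimpleGraph (Fin n)} {M' : SimpleGraph (Fin (n + 1))}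
    (hM' : IsRep M') {a b c : Fin n} {certs : List (Fin (n + 1) → Option (Fin n))}
    (h : ∃ τ ∈ certs, IsGraphEmbedding M' (triangleY M a b c) τ) :
    ∃ (k : ℕ) (N : SimpleGraph (Fin k)), IsRep N ∧ Nonempty (N ≃g triangleY M a b c) := by
  obtain ⟨τ, -, hτ⟩ := h
  exact ⟨n + 1, M', hM', ⟨hτ.toIso (by simp)⟩⟩

theorem IsRep.deltaY {n : ℕ} {M : SimpleGraph (Fin n)} (hM : IsRep M) {a b c : Fin n}
    (hab : M.Adj a b) (hbc : M.Adj b c) (hac : M.Adj a c) :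
    ∃ (k : ℕ) (N : SimpleGraph (Fin k)), IsRep N ∧ Nonempty (N ≃g triangleY M a b c) := by
  cases hM with
  | k6 => exact exists_rep_iso_triangleY .g7 (K6_deltaY a b c hab.ne hbc.ne hac.ne)
  | g7 =>
    rcases G7_deltaY a b c hab hbc hac with h | h
    exacts [exists_rep_iso_triangleY .g8 h, exists_rep_iso_triangleY .k44e h]
  | k331 => exact exists_rep_iso_triangleY .g8 (K331_deltaY a b c hab hbc hac)
  | g8 => exact exists_rep_iso_triangleY .g9 (G8_deltaY a b c hab hbc hac)
  | k44e => exact absurd hac (K44e_triangleFree a b c hab hbc)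
  | g9 => exact exists_rep_iso_triangleY .p10 (G9_deltaY a b c hab hbc hac)
  | p10 => exact absurd hac (P10_triangleFree a b c hab hbc)

theorem exists_rep_iso_of_yDeltaVia {m : ℕ} {M : SimpleGraph (Fin (m + 1))}
    {M' : SimpleGraph (Fin m)} (hM' : IsRep M') {v : Fin (m + 1)}
    {certs : List (Fin (m + 1) → Option (Fin m))} (h : IsYDeltaVia M v M' certs) :
    ∃ (k : ℕ) (N : SimpleGraph (Fin k)) (x y z : Fin k), IsRep N ∧
      N.Adj x y ∧ N.Adj y z ∧ N.Adj x z ∧ ∃ e : M ≃g triangleY N x y z, e v = none := by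
  obtain ⟨x, y, z, hxy, hyz, hxz, τ, -, hτv, hτ⟩ := h
  exact ⟨m, M', x, y, z, hM', hxy, hyz, hxz, hτ.toIso (by simp), hτv⟩

theorem IsRep.yDelta {n : ℕ} {M : SimpleGraph (Fin n)} (hM : IsRep M) {v p q r : Fin n}
    (hv : ∀ w, M.Adj v w ↔ w = p ∨ w = q ∨ w = r) :
    ∃ (k : ℕ) (N : SimpleGraph (Fin k)) (x y z : Fin k), IsRep N ∧
      N.Adj x y ∧ N.Adj y z ∧ N.Adj x z ∧ ∃ e : M ≃g triangleY N x y z, e v = none := by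
  cases hM with
  | k6 => exact absurd hv (K6_yDelta v p q r)
  | g7 => exact exists_rep_iso_of_yDeltaVia .k6 (G7_yDelta v p q r hv)
  | k331 => exact absurd hv (K331_yDelta v p q r)
  | g8 =>
    rcases G8_yDelta v p q r hv with h | h
    exacts [exists_rep_iso_of_yDeltaVia .k331 h, exists_rep_iso_of_yDeltaVia .g7 h]
  | k44e => exact exists_rep_iso_of_yDeltaVia .g7 (K44e_yDelta v p q r hv)
  | g9 => exact exists_rep_iso_of_yDeltaVia .g8 (G9_yDelta v p q r hv)
  | p10 => exact exists_rep_iso_of_yDeltaVia .g9 (P10_yDelta v p q r hv)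

end PetersenFamily

open PetersenFamily in
theorem IsPetersenFamily.exists_rep_iso {V : Type} {P : SimpleGraph V} (hP : IsPetersenFamily P) :
    ∃ (n : ℕ) (M : SimpleGraph (Fin n)), IsRep M ∧ Nonempty (M ≃g P) := by
  induction hP with
  | k6 => exact ⟨6, ⊤, .k6, ⟨Iso.refl⟩⟩
  | deltaY _ hab hbc hac ih =>
    obtain ⟨n, M, hM, ⟨e⟩⟩ := ih
    obtain ⟨k, N, hN, ⟨e'⟩⟩ := hM.deltaY (e.symm.map_adj_iff.2 hab) (e.symm.map_adj_iff.2 hbc)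
      (e.symm.map_adj_iff.2 hac)
    exact ⟨k, N, hN, ⟨e'.trans (e.triangleYCongr (by simp) (by simp) (by simp))⟩⟩
  | @yDelta _ _ a b c _ hab hbc hac ih =>
    obtain ⟨n, M, hM, ⟨e⟩⟩ := ih
    have hv : ∀ w, M.Adj (e.symm none) w ↔
        w = e.symm (some a) ∨ w = e.symm (some b) ∨ w = e.symm (some c) := fun w => by
      rw [← e.map_adj_iff, e.apply_symm_apply, triangleY_adj_none]
      simp only [RelIso.eq_symm_apply]
    obtain ⟨k, N, x, y, z, hN, hxy, hyz, hxz, e', he'⟩ := hM.yDelta hv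
    have hnone : (e'.symm.trans e) none = none := by
      simp [← he']
    obtain ⟨ψ⟩ := nonempty_iso_of_triangleY_iso hxy hyz hxz hab hbc hac _ hnone
    exact ⟨k, N, hN, ⟨ψ⟩⟩
  | iso _ e ih =>
    obtain ⟨n, M, hM, ⟨e'⟩⟩ := ih
    exact ⟨n, M, hM, ⟨e'.trans e⟩⟩

section Minor

variable {U W V V' : Type} {H : SimpleGraph W} {G : SimpleGraph V}

structure MinorModel (H : SimpleGraph W) (G : SimpleGraph V) where
  branch : W → Set V
  nonempty : ∀ w, (branch w).Nonempty
  connected : ∀ w, (G.induce (branch w)).Connected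
  disjoint : Pairwise fun w₁ w₂ => Disjoint (branch w₁) (branch w₂)
  adj : ∀ ⦃w₁ w₂⦄, H.Adj w₁ w₂ → ∃ v₁ ∈ branch w₁, ∃ v₂ ∈ branch w₂, G.Adj v₁ v₂

theorem isMinor_iff_nonempty_minorModel : IsMinor H G ↔ Nonempty (MinorModel H G) :=
  ⟨fun ⟨f, h₁, h₂, h₃, h₄⟩ => ⟨⟨f, h₁, h₂, h₃, h₄⟩⟩,
    fun ⟨m⟩ => ⟨m.branch, m.nonempty, m.connected, m.disjoint, m.adj⟩⟩

theorem adj_of_connected_induce_pair {u v : V} (huv : u ≠ v) (h : (G.induce {u, v}).Connected) :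
    G.Adj u v := by
  obtain ⟨p⟩ := h.preconnected ⟨u, by simp⟩ ⟨v, by simp⟩
  cases p with
  | nil => exact absurd rfl huv
  | @cons _ z _ hz _ =>
    have hz' : G.Adj u z := hz
    rcases z.2 with hzu | hzv
    · rw [hzu] at hz'
      exact absurd hz' (G.loopless.irrefl u)
    · rwa [hzv] at hz'

namespace MinorModel

theorem eq_of_mem_of_mem (m : MinorModel H G) {w₁ w₂ : W} {v : V} (h₁ : v ∈ m.branch w₁)
    (h₂ : v ∈ m.branch w₂) : w₁ = w₂ := by
  by_contra hne
  exact Set.disjoint_left.1 (m.disjoint hne) h₁ h₂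

noncomputable def rep (m : MinorModel H G) (w : W) : V := (m.nonempty w).some

theorem rep_mem (m : MinorModel H G) (w : W) : m.rep w ∈ m.branch w := (m.nonempty w).some_mem

theorem rep_injective (m : MinorModel H G) : Function.Injective m.rep :=
  fun _ _ h => m.eq_of_mem_of_mem (m.rep_mem _) (h ▸ m.rep_mem _)

theorem card_le (m : MinorModel H G) [Fintype W] [Fintype V] : Fintype.card W ≤ Fintype.card V :=
  Fintype.card_le_of_injective _ m.rep_injective

/-- A minor with at least as many vertices as `G` is a spanning subgraph of `G`, so the
complement of `G` embeds into the complement of the minor. -/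
theorem compl_isContained (m : MinorModel H G) [Fintype W] [Fintype V]
    (hcard : Fintype.card V ≤ Fintype.card W) : Gᶜ ⊑ Hᶜ := by
  have hbij : Function.Bijective m.rep :=
    (Fintype.bijective_iff_injective_and_card _).2 ⟨m.rep_injective, le_antisymm m.card_le hcard⟩
  set r := Equiv.ofBijective _ hbij
  have hmem : ∀ {w v}, v ∈ m.branch w → v = r w := fun {w v} hv => by
    obtain ⟨w', rfl⟩ := hbij.2 v
    rw [m.eq_of_mem_of_mem (m.rep_mem w') hv]
    rfl
  refine ⟨⟨⟨r.symm, fun {u v} huv => ?_⟩, r.symm.injective⟩⟩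
  rw [compl_adj] at huv ⊢
  refine ⟨r.symm.injective.ne huv.1, fun hH => huv.2 ?_⟩
  obtain ⟨v₁, hv₁, v₂, hv₂, hG⟩ := m.adj hH
  rwa [hmem hv₁, hmem hv₂, r.apply_symm_apply, r.apply_symm_apply] at hG

theorem degree_le_of_branch_eq_singleton (m : MinorModel H G) [Fintype W] [Fintype V]
    [DecidableRel H.Adj] [DecidableRel G.Adj] {w : W} {v : V} (hw : m.branch w = {v}) :
    H.degree w ≤ G.degree v := by
  have hnbr : ∀ w', H.Adj w w' → ∃ x ∈ m.branch w', G.Adj v x := fun w' hw' => by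
    obtain ⟨v₁, hv₁, x, hx, hG⟩ := m.adj hw'
    rw [hw, Set.mem_singleton_iff] at hv₁
    exact ⟨x, hx, hv₁ ▸ hG⟩
  have : Nonempty V := ⟨v⟩
  choose! g hg using hnbr
  rw [← card_neighborFinset_eq_degree, ← card_neighborFinset_eq_degree]
  refine Finset.card_le_card_of_injOn g (fun w' hw' => ?_) (fun w₁ hw₁ w₂ hw₂ h => ?_)
  · simpa using (hg w' (by simpa using hw')).2
  · exact m.eq_of_mem_of_mem (hg w₁ (by simpa using hw₁)).1 (h ▸ (hg w₂ (by simpa using hw₂)).1)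

/-- If `G` has at most one vertex more than the minor `H`, two vertices of `G` whose degrees are
below every degree of `H` must together form a branch set, hence be adjacent. -/
theorem adj_of_degree_lt (m : MinorModel H G) [Fintype W] [Fintype V] [DecidableEq V]
    [DecidableRel H.Adj] [DecidableRel G.Adj] (hcard : Fintype.card V ≤ Fintype.card W + 1)
    {u v : V} (huv : u ≠ v)
    (hu : ∀ w, G.degree u < H.degree w) (hv : ∀ w, G.degree v < H.degree w) : G.Adj u v := by
  obtain ⟨w, hw⟩ : ∃ w, m.branch w ⊆ {u, v} := by
    by_contra! h
    choose g hg using fun w => Set.not_subset.1 (h w)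
    have hle : (Finset.univ : Finset W).card ≤ (Finset.univ \ {u, v} : Finset V).card :=
      Finset.card_le_card_of_injOn g (fun w _ => by simpa using (hg w).2)
        (fun w₁ _ w₂ _ h => m.eq_of_mem_of_mem (hg w₁).1 (h ▸ (hg w₂).1))
    have h2 : ({u, v} : Finset V).card = 2 := Finset.card_pair huv
    rw [Finset.card_sdiff_of_subset (Finset.subset_univ _), h2, Finset.card_univ,
      Finset.card_univ] at hle
    have := Finset.card_le_univ ({u, v} : Finset V)
    omega
  have hmem : ∀ {x y}, m.branch w ⊆ {x, y} → (∀ w', G.degree y < H.degree w') →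
      x ∈ m.branch w := fun {x y} hsub hy => by
    by_contra hx
    have hwy : m.branch w = {y} := (m.nonempty w).subset_singleton_iff.1 fun z hz => by
      rcases hsub hz with rfl | h
      exacts [absurd hz hx, h]
    exact (hy w).not_ge (m.degree_le_of_branch_eq_singleton hwy)
  have hwuv : m.branch w = {u, v} :=
    hw.antisymm (Set.insert_subset (hmem hw hv) (Set.singleton_subset_iff.2
      (hmem (Set.pair_comm u v ▸ hw) hu)))
  exact adj_of_connected_induce_pair huv (hwuv ▸ m.connected w)

def compIso (m : MinorModel H G) {H' : SimpleGraph U} (e : H' ≃g H) : MinorModel H' G where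
  branch := m.branch ∘ e
  nonempty _ := m.nonempty _
  connected _ := m.connected _
  disjoint _ _ hne := m.disjoint (e.injective.ne hne)
  adj _ _ h := m.adj (e.map_adj_iff.2 h)

def mapIso (m : MinorModel H G) {G' : SimpleGraph V'} (e : G ≃g G') : MinorModel H G' where
  branch w := e '' m.branch w
  nonempty w := (m.nonempty w).image e
  connected w := (Iso.induce e (e.injective.injOn.bijOn_image)).connected_iff.1 (m.connected w)
  disjoint _ _ hne := (Set.disjoint_image_iff e.injective).2 (m.disjoint hne)
  adj _ _ h := by
    obtain ⟨v₁, hv₁, v₂, hv₂, hG⟩ := m.adj h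
    exact ⟨e v₁, Set.mem_image_of_mem e hv₁, e v₂, Set.mem_image_of_mem e hv₂, e.map_adj_iff.2 hG⟩

end MinorModel

def IsCliqueContraction (H : SimpleGraph W) (G : SimpleGraph V) (φ : V → W) : Prop :=
  (∀ w, ∃ v, φ v = w) ∧ (∀ u v, u ≠ v → φ u = φ v → G.Adj u v) ∧
    ∀ w₁ w₂, H.Adj w₁ w₂ → ∃ u v, φ u = w₁ ∧ φ v = w₂ ∧ G.Adj u v

instance [Fintype V] [Fintype W] [DecidableEq V] [DecidableEq W] [DecidableRel H.Adj]
    [DecidableRel G.Adj] (φ : V → W) : Decidable (IsCliqueContraction H G φ) :=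
  inferInstanceAs (Decidable (_ ∧ _ ∧ _))

theorem IsCliqueContraction.isMinor {φ : V → W} (h : IsCliqueContraction H G φ) : IsMinor H G := by
  obtain ⟨hsurj, hclique, hadj⟩ := h
  refine isMinor_iff_nonempty_minorModel.2 ⟨{
    branch := fun w => φ ⁻¹' {w}
    nonempty := fun w => hsurj w
    connected := fun w => ?_
    disjoint := fun w₁ w₂ hne => Set.disjoint_left.2 fun v h₁ h₂ => hne (h₁.symm.trans h₂)
    adj := fun w₁ w₂ h => ?_ }⟩
  · obtain ⟨v, hv⟩ := hsurj w
    have : Nonempty (φ ⁻¹' {w}) := ⟨⟨v, hv⟩⟩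
    refine ⟨fun x y => ?_⟩
    by_cases hxy : x = y
    · exact hxy ▸ Reachable.refl _
    · exact Adj.reachable (hclique x y (Subtype.coe_injective.ne hxy) (x.2.trans y.2.symm))
  · obtain ⟨u, v, rfl, rfl, huv⟩ := hadj w₁ w₂ h
    exact ⟨u, rfl, v, rfl, huv⟩

end Minor

section Linkless

variable {V V' : Type} {G : SimpleGraph V} {G' : SimpleGraph V'}

theorem isLinkless_of_forall_rep
    (h : ∀ (n : ℕ) (M : SimpleGraph (Fin n)), PetersenFamily.IsRep M → MinorModel M G → False) :
    IsLinkless G := fun _ _ hP hmin => by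
  obtain ⟨n, M, hM, ⟨e⟩⟩ := hP.exists_rep_iso
  obtain ⟨m⟩ := isMinor_iff_nonempty_minorModel.1 hmin
  exact h n M hM (m.compIso e)

theorem not_isLinkless_of_isMinor_top (h : IsMinor (⊤ : SimpleGraph (Fin 6)) G) : ¬IsLinkless G :=
  fun hG => hG _ .k6 h

theorem IsLinkless.of_iso (e : G ≃g G') (h : IsLinkless G) : IsLinkless G' := fun _ P hP hmin => by
  obtain ⟨m⟩ := isMinor_iff_nonempty_minorModel.1 hmin
  exact h P hP (isMinor_iff_nonempty_minorModel.2 ⟨m.mapIso e.symm⟩)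

instance [DecidableEq V] [DecidableRel G.Adj] (a b : V) : DecidableRel (addEdge G a b).Adj :=
  inferInstanceAs (DecidableRel (G ⊔ fromEdgeSet {s(a, b)}).Adj)

def SimpleGraph.Iso.addEdge (e : G ≃g G') (a b : V) :
    _root_.addEdge G a b ≃g _root_.addEdge G' (e a) (e b) where
  toEquiv := e.toEquiv
  map_rel_iff' := by
    intro x y
    simp [_root_.addEdge, e.map_adj_iff, e.injective.eq_iff]

theorem IsMaxnil.of_iso (e : G ≃g G') (h : IsMaxnil G) : IsMaxnil G' := by
  refine ⟨h.1.of_iso e, fun a b hab hnadj hlink => h.2 (e.symm a) (e.symm b)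
    (e.symm.injective.ne hab) (by rwa [e.symm.map_adj_iff]) ?_⟩
  exact hlink.of_iso (e.symm.addEdge a b)

end Linkless

theorem not_pathGraph_four_isContained {V : Type} {G : SimpleGraph V}
    (h : ∀ a b c d, G.Adj a b → G.Adj b c → G.Adj c d → a = c ∨ b = d ∨ a = d) :
    ¬pathGraph 4 ⊑ G := by
  rintro ⟨f⟩
  have hadj : ∀ i j : Fin 4, i.val + 1 = j.val → G.Adj (f i) (f j) :=
    fun i j hij => f.toHom.map_adj (pathGraph_adj.2 (Or.inl hij))
  rcases h _ _ _ _ (hadj 0 1 rfl) (hadj 1 2 rfl) (hadj 2 3 rfl) with h | h | h <;>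
    exact absurd (f.injective h) (by decide)

abbrev K6MinusEdge : SimpleGraph (Fin 6) := (⊤ : SimpleGraph (Fin 6)).deleteEdges {s(0, 1)}

abbrev K7MinusPath : SimpleGraph (Fin 7) :=
  (⊤ : SimpleGraph (Fin 7)).deleteEdges {s(0, 5), s(5, 6), s(6, 1)}

theorem pathGraph_four_isContained_compl_K7MinusPath : pathGraph 4 ⊑ K7MinusPathᶜ := by
  have hadj : ∀ i j : Fin 4, i.val + 1 = j.val ∨ j.val + 1 = i.val →
      K7MinusPathᶜ.Adj (![0, 5, 6, 1] i) (![0, 5, 6, 1] j) := by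
    decide
  have hinj : Function.Injective (![0, 5, 6, 1] : Fin 4 → Fin 7) := by decide
  exact ⟨⟨⟨_, fun h => hadj _ _ (pathGraph_adj.1 h)⟩, hinj⟩⟩

theorem isLinkless_K6MinusEdge : IsLinkless K6MinusEdge :=
  isLinkless_of_forall_rep fun n M hM m => by
    cases hM with
    | k6 =>
      obtain ⟨f⟩ := m.compl_isContained le_rfl
      simpa using f.toHom.map_adj (show K6MinusEdgeᶜ.Adj 0 1 by decide)
    | _ => exact absurd m.card_le (by simp)

theorem isLinkless_K7MinusPath : IsLinkless K7MinusPath :=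
  isLinkless_of_forall_rep fun n M hM m => by
    cases hM with
    | k6 =>
      have h56 := m.adj_of_degree_lt (by simp) (u := 5) (v := 6) (by decide) (by decide) (by decide)
      exact absurd h56 (by decide)
    | g7 =>
      exact not_pathGraph_four_isContained (by decide)
        (pathGraph_four_isContained_compl_K7MinusPath.trans (m.compl_isContained (by simp)))
    | k331 =>
      exact not_pathGraph_four_isContained (by decide)
        (pathGraph_four_isContained_compl_K7MinusPath.trans (m.compl_isContained (by simp)))
    | _ => exact absurd m.card_le (by simp)

theorem isMaxnil_K6MinusEdge : IsMaxnil K6MinusEdge := by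
  refine ⟨isLinkless_K6MinusEdge, fun a b hab hnadj => not_isLinkless_of_isMinor_top ?_⟩
  have : ∀ a b : Fin 6, a ≠ b → ¬K6MinusEdge.Adj a b →
      IsCliqueContraction ⊤ (addEdge K6MinusEdge a b) id := by
    decide
  exact (this a b hab hnadj).isMinor

theorem isMaxnil_K7MinusPath : IsMaxnil K7MinusPath := by
  refine ⟨isLinkless_K7MinusPath, fun a b hab hnadj => not_isLinkless_of_isMinor_top ?_⟩
  -- after adding `05`, `16` or `56`, contract the edge `06`, `15` or `01` respectively
  have : ∀ a b : Fin 7, a ≠ b → ¬K7MinusPath.Adj a b →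
      ∃ φ ∈ ([![0, 1, 2, 3, 4, 5, 0], ![0, 1, 2, 3, 4, 1, 5], ![0, 0, 1, 2, 3, 4, 5]] :
          List (Fin 7 → Fin 6)),
        IsCliqueContraction ⊤ (addEdge K7MinusPath a b) φ := by
    decide
  obtain ⟨φ, -, hφ⟩ := this a b hab hnadj
  exact hφ.isMinor

/-- There is a maxnil graph `G` on 7 vertices that is the clique sum over `K₅` of two
maxnil graphs, each isomorphic to `K₆` minus an edge. -/
theorem stmt_13 :
    ∃ (G : SimpleGraph (Fin 7)) (V₁ V₂ : Set (Fin 7)),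
      V₁ ∪ V₂ = Set.univ ∧
      (V₁ ∩ V₂).ncard = 5 ∧
      (∀ a ∈ V₁ ∩ V₂, ∀ b ∈ V₁ ∩ V₂, a ≠ b → G.Adj a b) ∧
      (∀ a b : Fin 7, G.Adj a b → (a ∈ V₁ ∧ b ∈ V₁) ∨ (a ∈ V₂ ∧ b ∈ V₂)) ∧
      IsMaxnil (G.induce V₁) ∧ IsMaxnil (G.induce V₂) ∧
      Nonempty
        (G.induce V₁ ≃g ((⊤ : SimpleGraph (Fin 6)).deleteEdges {s((0 : Fin 6), 1)})) ∧
      Nonempty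
        (G.induce V₂ ≃g ((⊤ : SimpleGraph (Fin 6)).deleteEdges {s((0 : Fin 6), 1)})) ∧
      IsMaxnil G := by
  obtain ⟨e₁⟩ := (by decide : IsGraphEmbedding K6MinusEdge K7MinusPath ![0, 5, 1, 2, 3, 4])
    |>.nonempty_induce_iso (s := {v | v ≠ 6}) (by
      ext v; simp only [Set.mem_range]; revert v; decide)
  obtain ⟨e₂⟩ := (by decide : IsGraphEmbedding K6MinusEdge K7MinusPath ![6, 1, 0, 2, 3, 4])
    |>.nonempty_induce_iso (s := {v | v ≠ 5}) (by
      ext v; simp only [Set.mem_range]; revert v; decide)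
  refine ⟨K7MinusPath, {v | v ≠ 6}, {v | v ≠ 5}, ?_, ?_, ?_, ?_,
    isMaxnil_K6MinusEdge.of_iso e₁.symm, isMaxnil_K6MinusEdge.of_iso e₂.symm, ⟨e₁⟩, ⟨e₂⟩,
    isMaxnil_K7MinusPath⟩
  · ext v
    simp only [Set.mem_union, Set.mem_ofPred_eq, Set.mem_univ, iff_true]
    revert v
    decide
  · rw [Set.ncard_eq_toFinset_card']
    rfl
  · decide
  · decide
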